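/- arXiv:2207.00488 — 4 statements merged into one kernel-verified Lean document; each statement's English description precedes it below -/
import Mathlib

section
/- Let λ ∈ ℝ, λ ≠ 0, and suppose complex-valued functions v, z, u¹, u², u³ on (0,L) satisfy: z = iλv, λ²ρv + αv_xx + γu³_x − az = 0, u² − u³_x = iλu¹, −(μ/(ξε₃))u¹ − bu² = iλu², −(μ/ε₃)u¹_x + (γ/ε₃)iλ v_x − cu³ = iλu³, with boundary conditions v(0) = 0, u¹(0) = u¹(L) = 0, and a > 0, b = c = 0. If additionally z = 0 (from the dissipation identity), then v = u¹ = u² = u³ = 0. -/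
/-!
Since `z = iλv` vanishes and `λ ≠ 0`, we get `v = 0`, so `v'` and `v''` vanish in the interior.
The equation `λ²ρv + αv'' + γ(u³)' − az = 0` then makes `u³` a constant `k`, and the equation for
`u³` makes `(μ/ε₃)u¹` affine with slope `−iλk`. The conditions `u¹(0) = u¹(L) = 0` kill the slope,
so `k = 0` and `u¹ = 0`, whence `u² = 0` by the equation for `u²`.
-/

open Set Complex

section DerivOnIoo

variable {E : Type*} [NormedAddCommGroup E] [NormedSpace ℝ E] {f : ℝ → E} {a b : ℝ}

theorem eq_add_smul_of_deriv_eqOn_Ioo (hab : a < b) (hf : Differentiable ℝ f) {C : E}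
    (h : ∀ x ∈ Ioo a b, deriv f x = C) : ∀ x ∈ Icc a b, f x = f a + (x - a) • C := by
  have hline : ∀ x, HasDerivAt (fun y : ℝ => (y - a) • C) C x := fun x => by
    simpa using ((hasDerivAt_id x).sub_const a).smul_const C
  obtain ⟨c, hc⟩ := isOpen_Ioo.exists_eq_add_of_deriv_eq isPreconnected_Ioo hf.differentiableOn
    (fun x _ => (hline x).differentiableAt.differentiableWithinAt)
    (fun x hx => by rw [h x hx, (hline x).deriv])
  have hcl : EqOn f (fun y => (y - a) • C + c) (Icc a b) := by
    rw [← closure_Ioo hab.ne]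
    exact hc.closure hf.continuous (by fun_prop)
  intro x hx
  rw [hcl hx, hcl (left_mem_Icc.2 hab.le)]
  simp only [sub_self, zero_smul, zero_add]
  exact add_comm _ _

theorem constant_of_deriv_eqOn_Ioo_zero (hab : a < b) (hf : Differentiable ℝ f)
    (h : EqOn (deriv f) 0 (Ioo a b)) : ∀ x ∈ Icc a b, f x = f a := fun x hx => by
  simpa using eq_add_smul_of_deriv_eqOn_Ioo hab hf (C := 0) h x hx

end DerivOnIoo

theorem stmt_4_general (L ρ α γ μ ξ ε₃ a lam : ℝ)
    (hL : 0 < L) (hγ : 0 < γ) (hμ : 0 < μ)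
    (hε : 0 < ε₃) (hlam : lam ≠ 0)
    (v z u1 u2 u3 : ℝ → ℂ)
    (hu1 : Differentiable ℝ u1) (hu3 : Differentiable ℝ u3)
    (e1 : ∀ x ∈ Icc (0:ℝ) L, z x = Complex.I * (lam:ℂ) * v x)
    (e2 : ∀ x ∈ Icc (0:ℝ) L,
      ((lam ^ 2 * ρ : ℝ):ℂ) * v x + (α:ℂ) * deriv (deriv v) x
        + (γ:ℂ) * deriv u3 x - (a:ℂ) * z x = 0)
    (e4 : ∀ x ∈ Icc (0:ℝ) L,
      -((μ / (ξ * ε₃) : ℝ):ℂ) * u1 x = Complex.I * (lam:ℂ) * u2 x)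
    (e5 : ∀ x ∈ Icc (0:ℝ) L,
      -((μ / ε₃ : ℝ):ℂ) * deriv u1 x + ((γ / ε₃ : ℝ):ℂ) * Complex.I * (lam:ℂ) * deriv v x
        = Complex.I * (lam:ℂ) * u3 x)
    (hb1 : u1 0 = 0) (hb2 : u1 L = 0)
    (hz : ∀ x ∈ Icc (0:ℝ) L, z x = 0) :
    ∀ x ∈ Icc (0:ℝ) L, v x = 0 ∧ u1 x = 0 ∧ u2 x = 0 ∧ u3 x = 0 := by
  have hIlam : I * (lam:ℂ) ≠ 0 := mul_ne_zero I_ne_zero (ofReal_ne_zero.2 hlam)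
  have hv : ∀ x ∈ Icc 0 L, v x = 0 := fun x hx =>
    (mul_eq_zero.1 ((e1 x hx).symm.trans (hz x hx))).resolve_left hIlam
  have hvIoo : EqOn v 0 (Ioo 0 L) := fun x hx => hv x (Ioo_subset_Icc_self hx)
  have hdv : EqOn (deriv v) 0 (Ioo 0 L) := by simpa using hvIoo.deriv isOpen_Ioo
  have hddv : EqOn (deriv (deriv v)) 0 (Ioo 0 L) := by simpa using hdv.deriv isOpen_Ioo
  have hdu3 : EqOn (deriv u3) 0 (Ioo 0 L) := fun x hx => by
    have h := e2 x (Ioo_subset_Icc_self hx)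
    rw [hvIoo hx, hddv hx, hz x (Ioo_subset_Icc_self hx)] at h
    simpa [hγ.ne'] using h
  have hu3 := constant_of_deriv_eqOn_Ioo_zero hL hu3 hdu3
  have hdw : ∀ x ∈ Ioo 0 L,
      deriv (fun y => -((μ / ε₃ : ℝ):ℂ) * u1 y) x = I * lam * u3 0 := fun x hx => by
    rw [deriv_const_mul _ (hu1 x), ← hu3 x (Ioo_subset_Icc_self hx)]
    simpa [hdv hx] using e5 x (Ioo_subset_Icc_self hx)
  have hw := eq_add_smul_of_deriv_eqOn_Ioo hL (hu1.const_mul _) hdw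
  have hk : u3 0 = 0 := by
    have h := hw L (right_mem_Icc.2 hL.le)
    simp only [hb1, hb2, mul_zero, zero_add, sub_zero, real_smul] at h
    simpa [hL.ne', hlam] using h.symm
  have hu1 : ∀ x ∈ Icc 0 L, u1 x = 0 := fun x hx => by
    simpa [hb1, hk, hμ.ne', hε.ne'] using hw x hx
  refine fun x hx => ⟨hv x hx, hu1 x hx, ?_, by rw [hu3 x hx, hk]⟩
  simpa [hu1 x hx, hlam] using (e4 x hx).symm

/-- Case 5 of strong stability (a > 0, b = c = 0): the eigenvalue
system on the imaginary axis with z = 0 forces all components to vanish. -/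
theorem stmt_4 (L ρ α γ μ ξ ε₃ a lam : ℝ)
    (hL : 0 < L) (hρ : 0 < ρ) (hα : 0 < α) (hγ : 0 < γ) (hμ : 0 < μ)
    (hξ : 0 < ξ) (hε : 0 < ε₃) (ha : 0 < a) (hlam : lam ≠ 0)
    (v z u1 u2 u3 : ℝ → ℂ)
    (hv : Differentiable ℝ v) (hv' : Differentiable ℝ (deriv v))
    (hu1 : Differentiable ℝ u1) (hu3 : Differentiable ℝ u3)
    (e1 : ∀ x ∈ Icc (0:ℝ) L, z x = Complex.I * (lam:ℂ) * v x)
    (e2 : ∀ x ∈ Icc (0:ℝ) L,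
      ((lam ^ 2 * ρ : ℝ):ℂ) * v x + (α:ℂ) * deriv (deriv v) x
        + (γ:ℂ) * deriv u3 x - (a:ℂ) * z x = 0)
    (e3 : ∀ x ∈ Icc (0:ℝ) L, u2 x - deriv u3 x = Complex.I * (lam:ℂ) * u1 x)
    (e4 : ∀ x ∈ Icc (0:ℝ) L,
      -((μ / (ξ * ε₃) : ℝ):ℂ) * u1 x = Complex.I * (lam:ℂ) * u2 x)
    (e5 : ∀ x ∈ Icc (0:ℝ) L,
      -((μ / ε₃ : ℝ):ℂ) * deriv u1 x + ((γ / ε₃ : ℝ):ℂ) * Complex.I * (lam:ℂ) * deriv v x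
        = Complex.I * (lam:ℂ) * u3 x)
    (hb0 : v 0 = 0) (hb1 : u1 0 = 0) (hb2 : u1 L = 0)
    (hz : ∀ x ∈ Icc (0:ℝ) L, z x = 0) :
    ∀ x ∈ Icc (0:ℝ) L, v x = 0 ∧ u1 x = 0 ∧ u2 x = 0 ∧ u3 x = 0 :=
  stmt_4_general L ρ α γ μ ξ ε₃ a lam hL hγ hμ hε hlam v z u1 u2 u3 hu1 hu3 e1 e2 e4 e5 hb1 hb2 hz
end

section
/- Let ρ, α, μ, ξ, ε₃, γ, L, c > 0 and suppose μρ/(ξε₃α) = (2n+1)²π²/(4L²) for some nonnegative integer n. Set λ = ((2n+1)π/(2L))√(α/ρ) and v(x) = sin(λ√(ρ/α) x). Then the tuple U = (v, iλv, iλ(γ/μ)v, −(γ/(ε₃ξ))v, 0) satisfies the eigenvalue equations: z = iλv; λ²ρv + αv'' = 0; u² = iλu¹ − u³_x, which with u³ = 0 gives −(γ/(ε₃ξ))v = iλ · iλ(γ/μ)v and holds since λ² = μ/(ξε₃); −(μ/(ξε₃))u¹ = iλu²; and (μ/ε₃)u¹' = (γ/ε₃)iλ v'. Moreover v(0) = 0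 and v'(L) = 0. -/
open Set Real

/-- when the spectral condition fails, the explicitly given vector is
an eigenvector of A₍₀,₀,c₎ associated with the purely imaginary eigenvalue iλ. -/
theorem stmt_7 (ρ α μ ξ ε₃ γ L c : ℝ) (n : ℕ)
    (hρ : 0 < ρ) (hα : 0 < α) (hμ : 0 < μ) (hξ : 0 < ξ) (hε : 0 < ε₃)
    (hγ : 0 < γ) (hL : 0 < L) (hc : 0 < c)
    (hSC : μ * ρ / (ξ * ε₃ * α) = (2 * n + 1) ^ 2 * Real.pi ^ 2 / (4 * L ^ 2))
    (lam : ℝ) (hlam : lam = (2 * n + 1) * Real.pi / (2 * L) * Real.sqrt (α / ρ))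
    (v : ℝ → ℂ)
    (hv : ∀ x : ℝ, v x = Complex.sin ((lam * Real.sqrt (ρ / α) * x : ℝ) : ℂ)) :
    lam ^ 2 = μ / (ξ * ε₃) ∧
    (∀ x : ℝ, ((lam ^ 2 * ρ : ℝ):ℂ) * v x + (α:ℂ) * deriv (deriv v) x = 0) ∧
    (∀ x : ℝ, -(((γ / (ε₃ * ξ) : ℝ)):ℂ) * v x
        = Complex.I * (lam:ℂ) * (Complex.I * (lam:ℂ) * ((γ / μ : ℝ):ℂ) * v x)) ∧
    (∀ x : ℝ, -(((μ / (ξ * ε₃) : ℝ)):ℂ) * (Complex.I * (lam:ℂ) * ((γ / μ : ℝ):ℂ) * v x)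
        = Complex.I * (lam:ℂ) * (-(((γ / (ε₃ * ξ) : ℝ)):ℂ) * v x)) ∧
    (∀ x : ℝ, ((μ / ε₃ : ℝ):ℂ) * deriv (fun y => Complex.I * (lam:ℂ) * ((γ / μ : ℝ):ℂ) * v y) x
        = ((γ / ε₃ : ℝ):ℂ) * Complex.I * (lam:ℂ) * deriv v x) ∧
    v 0 = 0 ∧ deriv v L = 0 := by
  set k : ℝ := lam * Real.sqrt (ρ / α) with hk
  have hv' : v = fun x : ℝ => Complex.sin ((k:ℂ) * (x:ℂ)) := by
    funext x
    rw [hv x]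
    push_cast
    ring_nf
  -- basic positivity / sqrt facts
  have hsq_αρ : Real.sqrt (α / ρ) ^ 2 = α / ρ := Real.sq_sqrt (by positivity)
  have hsq_ρα : Real.sqrt (ρ / α) ^ 2 = ρ / α := Real.sq_sqrt (by positivity)
  -- λ² = μ/(ξ ε₃)
  have hlam2 : lam ^ 2 = μ / (ξ * ε₃) := by
    have h1 : lam ^ 2 = ((2 * n + 1) * Real.pi / (2 * L)) ^ 2 * (α / ρ) := by
      rw [hlam, mul_pow, hsq_αρ]
    have h2 : ((2 * n + 1) * Real.pi / (2 * L)) ^ 2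
        = (2 * (n:ℝ) + 1) ^ 2 * Real.pi ^ 2 / (4 * L ^ 2) := by
      field_simp; ring
    rw [h1, h2, ← hSC]
    field_simp
  -- first derivative of v
  have hd1 : ∀ x : ℝ, HasDerivAt v ((k:ℂ) * Complex.cos ((k:ℂ)*x)) x := by
    intro x
    rw [hv']
    have h1 : HasDerivAt (fun z : ℂ => Complex.sin ((k:ℂ) * z))
        ((k:ℂ) * Complex.cos ((k:ℂ)*x)) (x:ℂ) := by
      have := (Complex.hasDerivAt_sin ((k:ℂ)*(x:ℂ))).comp (x:ℂ)
        ((hasDerivAt_id (x:ℂ)).const_mul (k:ℂ))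
      rw [mul_comm (Complex.cos _), mul_one] at this
      exact this
    exact h1.comp_ofReal
  have hdv : deriv v = fun x : ℝ => (k:ℂ) * Complex.cos ((k:ℂ)*x) := by
    funext x; exact (hd1 x).deriv
  -- second derivative
  have hd2 : ∀ x : ℝ, HasDerivAt (deriv v) (-((k:ℂ)^2) * Complex.sin ((k:ℂ)*x)) x := by
    intro x
    rw [hdv]
    have h1 : HasDerivAt (fun z : ℂ => (k:ℂ) * Complex.cos ((k:ℂ) * z))
        (-((k:ℂ)^2) * Complex.sin ((k:ℂ)*x)) (x:ℂ) := by
      have h0 : HasDerivAt (fun z : ℂ => Complex.cos ((k:ℂ) * z))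
          (-Complex.sin ((k:ℂ)*x) * ((k:ℂ) * 1)) (x:ℂ) :=
        (Complex.hasDerivAt_cos ((k:ℂ)*(x:ℂ))).comp (x:ℂ)
          ((hasDerivAt_id (x:ℂ)).const_mul (k:ℂ))
      have := h0.const_mul (k:ℂ)
      have e : -((k:ℂ)^2) * Complex.sin ((k:ℂ)*x)
          = (k:ℂ) * (-Complex.sin ((k:ℂ)*x) * ((k:ℂ) * 1)) := by ring
      rw [e]; exact this
    exact h1.comp_ofReal
  have hddv : ∀ x : ℝ, deriv (deriv v) x = -((k:ℂ)^2) * v x := by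
    intro x
    rw [(hd2 x).deriv, hv']
  -- α k² = λ² ρ (as complex numbers)
  have hk2 : (α:ℂ) * (k:ℂ)^2 = (lam:ℂ)^2 * (ρ:ℂ) := by
    have : α * k ^ 2 = lam ^ 2 * ρ := by
      rw [hk, mul_pow, hsq_ρα]
      field_simp
    calc (α:ℂ) * (k:ℂ)^2 = ((α * k ^ 2 : ℝ) : ℂ) := by push_cast; ring
      _ = ((lam ^ 2 * ρ : ℝ) : ℂ) := by rw [this]
      _ = (lam:ℂ)^2 * (ρ:ℂ) := by push_cast; ring
  refine ⟨hlam2, ?_, ?_, ?_, ?_, ?_, ?_⟩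
  · intro x
    rw [hddv x]
    push_cast
    calc (lam:ℂ) ^ 2 * (ρ:ℂ) * v x + (α:ℂ) * (-((k:ℂ)^2) * v x)
        = ((lam:ℂ)^2 * (ρ:ℂ) - (α:ℂ) * (k:ℂ)^2) * v x := by ring
      _ = 0 := by rw [← hk2]; ring
  · intro x
    symm
    have h : ((lam:ℂ))^2 = ((μ / (ξ * ε₃) : ℝ) : ℂ) := by
      rw [← hlam2]; push_cast; ring
    have hμ' : (μ:ℂ) ≠ 0 := by exact_mod_cast hμ.ne'
    have hξ' : (ξ:ℂ) ≠ 0 := by exact_mod_cast hξ.ne'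
    have hε' : (ε₃:ℂ) ≠ 0 := by exact_mod_cast hε.ne'
    calc Complex.I * (lam:ℂ) * (Complex.I * (lam:ℂ) * ((γ / μ : ℝ):ℂ) * v x)
        = (Complex.I * Complex.I) * (lam:ℂ)^2 * ((γ / μ : ℝ):ℂ) * v x := by ring
      _ = -(((lam:ℂ))^2 * ((γ / μ : ℝ):ℂ)) * v x := by
          rw [Complex.I_mul_I]; ring
      _ = -(((γ / (ε₃ * ξ) : ℝ)):ℂ) * v x := by
          rw [h]; push_cast; field_simp
  · intro x
    have hAB : ((μ / (ξ * ε₃) : ℝ):ℂ) * ((γ / μ : ℝ):ℂ) = ((γ / (ε₃ * ξ) : ℝ):ℂ) := by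
      have hμ' : (μ:ℂ) ≠ 0 := by exact_mod_cast hμ.ne'
      have hξ' : (ξ:ℂ) ≠ 0 := by exact_mod_cast hξ.ne'
      have hε' : (ε₃:ℂ) ≠ 0 := by exact_mod_cast hε.ne'
      push_cast
      field_simp
    linear_combination (-(Complex.I * (lam:ℂ) * v x)) * hAB
  · intro x
    have hdiff : DifferentiableAt ℝ v x := (hd1 x).differentiableAt
    have : deriv (fun y => Complex.I * (lam:ℂ) * ((γ / μ : ℝ):ℂ) * v y) x
        = Complex.I * (lam:ℂ) * ((γ / μ : ℝ):ℂ) * deriv v x := by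
      simp only [mul_assoc]
      rw [deriv_const_mul _ (by fun_prop)]
      rw [deriv_const_mul _ (by fun_prop)]
      rw [deriv_const_mul _ hdiff]
    rw [this]
    have hμ' : (μ:ℂ) ≠ 0 := by exact_mod_cast hμ.ne'
    have hε' : (ε₃:ℂ) ≠ 0 := by exact_mod_cast hε.ne'
    push_cast
    field_simp
  · rw [hv']
    simp
  · -- deriv v L = k cos(kL) and kL = (2n+1)π/2
    rw [(hd1 L).deriv]
    have hkL : k * L = (2 * n + 1) * Real.pi / 2 := by
      have hss : Real.sqrt (α / ρ) * Real.sqrt (ρ / α) = 1 := by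
        rw [← Real.sqrt_mul (by positivity)]
        rw [show α / ρ * (ρ / α) = 1 by field_simp]
        exact Real.sqrt_one
      rw [hk, hlam]
      rw [show (2 * (n:ℝ) + 1) * Real.pi / (2 * L) * Real.sqrt (α / ρ) * Real.sqrt (ρ / α) * L
          = (2 * (n:ℝ) + 1) * Real.pi / (2 * L) * L * (Real.sqrt (α / ρ) * Real.sqrt (ρ / α))
          from by ring, hss, mul_one]
      field_simp
    have hcos : Real.cos (k * L) = 0 := by
      rw [hkL]
      rw [Real.cos_eq_zero_iff]
      exact ⟨(n:ℤ), by push_cast; ring⟩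
    have : Complex.cos ((k:ℂ) * (L:ℂ)) = 0 := by
      rw [show (k:ℂ) * (L:ℂ) = ((k * L : ℝ) : ℂ) by push_cast; ring]
      rw [← Complex.ofReal_cos, hcos, Complex.ofReal_zero]
    rw [this, mul_zero]
end

section
/- Let λ ∈ ℝ, λ ≠ 0, a > 0, b > 0, c = 0, and suppose (v, z, u¹, u², u³) solves A_{a,b,0}U = iλU with v(0) = 0. The dissipation identity gives z = 0 and u² = 0. Then: v = 0 (from z = iλv), u¹ = 0 (from −(μ/(ξε₃))u¹ = iλu²), and u³ = 0 (from −(μ/ε₃)u¹_x + (γ/ε₃)iλv_x = iλu³). Hence U = 0 and A_{a,b,0} has no purely imaginary eigenvalues. -/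
open Set Complex

lemma deriv_zero_of_eqOn_zero {L : ℝ} (hL : 0 < L) (f : ℝ → ℂ)
    (hf : Differentiable ℝ f) (h : ∀ x ∈ Icc (0:ℝ) L, f x = 0) :
    ∀ x ∈ Icc (0:ℝ) L, deriv f x = 0 := by
  intro x hx
  have hU : UniqueDiffWithinAt ℝ (Icc (0:ℝ) L) x :=
    (uniqueDiffOn_Icc hL) x hx
  have h1 : HasDerivWithinAt f 0 (Icc (0:ℝ) L) x :=
    (hasDerivWithinAt_const x _ (0:ℂ)).congr (fun y hy => h y hy) (h x hx)
  have h2 : HasDerivWithinAt f (deriv f x) (Icc (0:ℝ) L) x :=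
    (hf x).hasDerivAt.hasDerivWithinAt
  have := (h2.derivWithin hU).symm.trans (h1.derivWithin hU)
  exact this

/-- Case 4 of strong stability (a, b > 0, c = 0): the eigenvalue
system with z = 0 and u² = 0 forces v = u¹ = u³ = 0, so A₍a,b,0₎ has no purely
imaginary eigenvalues. -/
theorem stmt_11 (L ρ α γ μ ξ ε₃ a b lam : ℝ)
    (hL : 0 < L) (hρ : 0 < ρ) (hα : 0 < α) (hγ : 0 < γ) (hμ : 0 < μ)
    (hξ : 0 < ξ) (hε : 0 < ε₃) (ha : 0 < a) (hb : 0 < b) (hlam : lam ≠ 0)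
    (v z u1 u2 u3 : ℝ → ℂ)
    (hv : Differentiable ℝ v) (hv' : Differentiable ℝ (deriv v))
    (hu1 : Differentiable ℝ u1) (hu3 : Differentiable ℝ u3)
    (e1 : ∀ x ∈ Icc (0:ℝ) L, z x = Complex.I * (lam:ℂ) * v x)
    (e2 : ∀ x ∈ Icc (0:ℝ) L,
      ((lam ^ 2 * ρ : ℝ):ℂ) * v x + (α:ℂ) * deriv (deriv v) x
        + (γ:ℂ) * deriv u3 x - (a:ℂ) * z x = 0)
    (e3 : ∀ x ∈ Icc (0:ℝ) L, u2 x - deriv u3 x = Complex.I * (lam:ℂ) * u1 x)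
    (e4 : ∀ x ∈ Icc (0:ℝ) L,
      -((μ / (ξ * ε₃) : ℝ):ℂ) * u1 x - (b:ℂ) * u2 x = Complex.I * (lam:ℂ) * u2 x)
    (e5 : ∀ x ∈ Icc (0:ℝ) L,
      -((μ / ε₃ : ℝ):ℂ) * deriv u1 x + ((γ / ε₃ : ℝ):ℂ) * Complex.I * (lam:ℂ) * deriv v x
        = Complex.I * (lam:ℂ) * u3 x)
    (hb0 : v 0 = 0)
    (hz : ∀ x ∈ Icc (0:ℝ) L, z x = 0)
    (hu2 : ∀ x ∈ Icc (0:ℝ) L, u2 x = 0) :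
    ∀ x ∈ Icc (0:ℝ) L, v x = 0 ∧ u1 x = 0 ∧ u3 x = 0 ∧ z x = 0 ∧ u2 x = 0 := by
  have hlamC : ((lam:ℂ)) ≠ 0 := Complex.ofReal_ne_zero.mpr hlam
  have hIlam : Complex.I * (lam:ℂ) ≠ 0 := mul_ne_zero Complex.I_ne_zero hlamC
  -- v = 0 on Icc
  have hv0 : ∀ x ∈ Icc (0:ℝ) L, v x = 0 := by
    intro x hx
    have := (e1 x hx).symm.trans (hz x hx)
    exact (mul_eq_zero.mp this).resolve_left hIlam
  -- u1 = 0 on Icc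
  have hc : ((μ / (ξ * ε₃) : ℝ):ℂ) ≠ 0 := by
    refine Complex.ofReal_ne_zero.mpr ?_
    positivity
  have hu10 : ∀ x ∈ Icc (0:ℝ) L, u1 x = 0 := by
    intro x hx
    have h4 := e4 x hx
    rw [hu2 x hx] at h4
    simp only [mul_zero, sub_zero] at h4
    have : ((μ / (ξ * ε₃) : ℝ):ℂ) * u1 x = 0 := by
      have := h4
      rw [neg_mul] at this
      linear_combination -this
    exact (mul_eq_zero.mp this).resolve_left hc
  -- derivatives vanish on Icc
  have hdv : ∀ x ∈ Icc (0:ℝ) L, deriv v x = 0 :=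
    deriv_zero_of_eqOn_zero hL v hv hv0
  have hdu1 : ∀ x ∈ Icc (0:ℝ) L, deriv u1 x = 0 :=
    deriv_zero_of_eqOn_zero hL u1 hu1 hu10
  -- u3 = 0 on Icc
  have hu30 : ∀ x ∈ Icc (0:ℝ) L, u3 x = 0 := by
    intro x hx
    have h5 := e5 x hx
    rw [hdv x hx, hdu1 x hx] at h5
    simp only [mul_zero, neg_zero, add_zero, zero_add] at h5
    exact (mul_eq_zero.mp h5.symm).resolve_left hIlam
  intro x hx
  exact ⟨hv0 x hx, hu10 x hx, hu30 x hx, hz x hx, hu2 x hx⟩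
end

section
/- Let E : [0,∞) → ℝ be defined by E(t) = (ρ/2)∫₀ᴸ|v_t|²dx + (α/2)∫₀ᴸ|v_x|²dx + (μ/2)∫₀ᴸ|θ−η_x|²dx + (1/2)∫₀ᴸ(ξε₃|θ_t+φ_x|² + ε₃|η_t+φ|²)dx along smooth solutions of the damped Lorenz piezoelectric system. Then dE/dt = −a∫₀ᴸ|v_t|²dx − bξε₃∫₀ᴸ|θ_t+φ_x|²dx − cε₃∫₀ᴸ|η_t+φ|²dx ≤ 0 for a, b, c ≥ 0; i.e., E is nonincreasing. -/
/-!
Along a solution the energy density `e` satisfies the local balance law `e_t = F_x - D`, with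
flux `F = v_t (α v_x + γ φ + γ η_t) - μ (θ - η_x)(η_t + φ)` and dissipation density
`D = a v_t² + b ξ ε₃ (θ_t + φ_x)² + c ε₃ (η_t + φ)²`: multiply the equations for `v`, `θ`, `η` by
`v_t`, `ξ ε₃ (θ_t + φ_x)`, `ε₃ (η_t + φ)`, and eliminate `φ_t` and `φ_xt` with the gauge condition
and its `x`-derivative. The boundary conditions make `F` vanish at `x = 0` and `x = L`
(`v_t(0, t) = 0` because `v(0, ·)` vanishes on `[0, ∞)`), so differentiating under the integral
sign gives `E' = -∫ D ≤ 0`.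
-/

open Set

/-- Partial derivative in time (second variable). -/
noncomputable def pt (f : ℝ → ℝ → ℝ) (x t : ℝ) : ℝ := deriv (fun s => f x s) t

/-- Partial derivative in space (first variable). -/
noncomputable def px (f : ℝ → ℝ → ℝ) (x t : ℝ) : ℝ := deriv (fun y => f y t) x

/-- The natural energy of the Lorenz piezoelectric system. -/
noncomputable def energy (ρ α μ ξ ε₃ L : ℝ) (v φ θ η : ℝ → ℝ → ℝ) (t : ℝ) : ℝ :=
  ρ / 2 * (∫ x in (0:ℝ)..L, (pt v x t) ^ 2)
    + α / 2 * (∫ x in (0:ℝ)..L, (px v x t) ^ 2)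
    + μ / 2 * (∫ x in (0:ℝ)..L, (θ x t - px η x t) ^ 2)
    + 1 / 2 * (∫ x in (0:ℝ)..L,
        (ξ * ε₃ * (pt θ x t + px φ x t) ^ 2 + ε₃ * (pt η x t + φ x t) ^ 2))

open Function MeasureTheory

noncomputable def energyDensity (ρ α μ ξ ε₃ : ℝ) (v φ θ η : ℝ → ℝ → ℝ) (x t : ℝ) : ℝ :=
  ρ / 2 * (pt v x t) ^ 2 + α / 2 * (px v x t) ^ 2 + μ / 2 * (θ x t - px η x t) ^ 2
    + 1 / 2 * (ξ * ε₃ * (pt θ x t + px φ x t) ^ 2 + ε₃ * (pt η x t + φ x t) ^ 2)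

noncomputable def energyFlux (α γ μ : ℝ) (v φ θ η : ℝ → ℝ → ℝ) (x t : ℝ) : ℝ :=
  pt v x t * (α * px v x t + γ * φ x t + γ * pt η x t)
    - μ * (θ x t - px η x t) * (pt η x t + φ x t)

noncomputable def dissipationDensity (a b c ξ ε₃ : ℝ) (v φ θ η : ℝ → ℝ → ℝ) (x t : ℝ) : ℝ :=
  a * (pt v x t) ^ 2 + b * ξ * ε₃ * (pt θ x t + px φ x t) ^ 2
    + c * ε₃ * (pt η x t + φ x t) ^ 2

section PartialDerivatives

theorem DifferentiableAt.hasDerivAt_slice_fst {E : Type*} [NormedAddCommGroup E]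
    [NormedSpace ℝ E] {g : ℝ × ℝ → E} {x t : ℝ} (hg : DifferentiableAt ℝ g (x, t)) :
    HasDerivAt (fun y => g (y, t)) (fderiv ℝ g (x, t) (1, 0)) x := by
  simpa [comp_def] using
    hg.hasFDerivAt.comp_hasDerivAt x ((hasDerivAt_id x).prodMk (hasDerivAt_const x t))

theorem DifferentiableAt.hasDerivAt_slice_snd {E : Type*} [NormedAddCommGroup E]
    [NormedSpace ℝ E] {g : ℝ × ℝ → E} {x t : ℝ} (hg : DifferentiableAt ℝ g (x, t)) :
    HasDerivAt (fun s => g (x, s)) (fderiv ℝ g (x, t) (0, 1)) t := by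
  simpa [comp_def] using
    hg.hasFDerivAt.comp_hasDerivAt t ((hasDerivAt_const t x).prodMk (hasDerivAt_id t))

variable {f : ℝ → ℝ → ℝ} {x t : ℝ}

theorem px_eq_fderiv (hf : DifferentiableAt ℝ (uncurry f) (x, t)) :
    px f x t = fderiv ℝ (uncurry f) (x, t) (1, 0) :=
  hf.hasDerivAt_slice_fst.deriv

theorem pt_eq_fderiv (hf : DifferentiableAt ℝ (uncurry f) (x, t)) :
    pt f x t = fderiv ℝ (uncurry f) (x, t) (0, 1) :=
  hf.hasDerivAt_slice_snd.deriv

theorem ContDiff.hasDerivAt_px (hf : ContDiff ℝ 1 (uncurry f)) :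
    HasDerivAt (fun y => f y t) (px f x t) x :=
  px_eq_fderiv (hf.differentiable one_ne_zero _) ▸
    (hf.differentiable one_ne_zero _).hasDerivAt_slice_fst

theorem ContDiff.hasDerivAt_pt (hf : ContDiff ℝ 1 (uncurry f)) :
    HasDerivAt (fun s => f x s) (pt f x t) t :=
  pt_eq_fderiv (hf.differentiable one_ne_zero _) ▸
    (hf.differentiable one_ne_zero _).hasDerivAt_slice_snd

theorem contDiff_px {n : WithTop ℕ∞} (hf : ContDiff ℝ (n + 1) (uncurry f)) :
    ContDiff ℝ n (uncurry (px f)) := by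
  have hd := hf.differentiable (by simp)
  have : uncurry (px f) = fun p => fderiv ℝ (uncurry f) p (1, 0) :=
    funext fun p => px_eq_fderiv (hd p)
  rw [this]
  exact (hf.fderiv_right le_rfl).clm_apply contDiff_const

theorem contDiff_pt {n : WithTop ℕ∞} (hf : ContDiff ℝ (n + 1) (uncurry f)) :
    ContDiff ℝ n (uncurry (pt f)) := by
  have hd := hf.differentiable (by simp)
  have : uncurry (pt f) = fun p => fderiv ℝ (uncurry f) p (0, 1) :=
    funext fun p => pt_eq_fderiv (hd p)
  rw [this]
  exact (hf.fderiv_right le_rfl).clm_apply contDiff_const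

theorem pt_px_comm (hf : ContDiff ℝ 2 (uncurry f)) (x t : ℝ) :
    pt (px f) x t = px (pt f) x t := by
  have hd := hf.differentiable (by simp)
  have hd' := (hf.fderiv_right (m := 1) (by norm_num)).differentiable (by simp) (x, t)
  have hpx : px f = fun y s => fderiv ℝ (uncurry f) (y, s) (1, 0) :=
    funext₂ fun y s => px_eq_fderiv (hd (y, s))
  have hpt : pt f = fun y s => fderiv ℝ (uncurry f) (y, s) (0, 1) :=
    funext₂ fun y s => pt_eq_fderiv (hd (y, s))
  rw [hpx, hpt, pt, px, (hd'.hasDerivAt_slice_snd.clm_apply (hasDerivAt_const t _)).deriv,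
    (hd'.hasDerivAt_slice_fst.clm_apply (hasDerivAt_const x _)).deriv]
  simpa using hf.contDiffAt.isSymmSndFDerivAt
    (by simp [minSmoothness_of_isRCLikeNormedField]) (0, 1) (1, 0)

theorem continuous_pt (hf : ContDiff ℝ 1 (uncurry f)) : Continuous (uncurry (pt f)) :=
  (contDiff_pt (n := 0) (by simpa using hf)).continuous

theorem continuous_px (hf : ContDiff ℝ 1 (uncurry f)) : Continuous (uncurry (px f)) :=
  (contDiff_px (n := 0) (by simpa using hf)).continuous

end PartialDerivatives

theorem HasDerivAt.eq_zero_of_forall_Ici {g : ℝ → ℝ} {g' s₀ s : ℝ} (hg : HasDerivAt g g' s)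
    (hs : s₀ ≤ s) (hzero : ∀ r, s₀ ≤ r → g r = 0) : g' = 0 :=
  (uniqueDiffWithinAt_Ici s).eq_deriv _ hg.hasDerivWithinAt <|
    (hasDerivWithinAt_const s _ 0).congr (fun r hr => hzero r (hs.trans hr)) (hzero s hs)

section EnergyBalance

variable {e F : ℝ → ℝ → ℝ} {a b t : ℝ}

theorem hasDerivAt_intervalIntegral_of_contDiff (he : ContDiff ℝ 1 (uncurry e)) :
    HasDerivAt (fun τ => ∫ x in a..b, e x τ) (∫ x in a..b, pt e x t) t := by
  obtain ⟨M, hM⟩ := (isCompact_uIcc.prod (isCompact_closedBall t 1)).exists_bound_of_continuousOn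
    (continuous_pt he).continuousOn
  refine (intervalIntegral.hasDerivAt_integral_of_dominated_loc_of_deriv_le
    (bound := fun _ => M) (Metric.ball_mem_nhds t one_pos)
    (.of_forall fun τ => (he.continuous.uncurry_right τ).aestronglyMeasurable)
    ((he.continuous.uncurry_right t).intervalIntegrable a b)
    ((continuous_pt he).uncurry_right t).aestronglyMeasurable
    (.of_forall fun x hx τ hτ =>
      hM (x, τ) ⟨uIoc_subset_uIcc hx, Metric.ball_subset_closedBall hτ⟩)
    intervalIntegrable_const
    (.of_forall fun x _ τ _ => he.hasDerivAt_pt)).2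

theorem hasDerivAt_intervalIntegral_of_balance {d : ℝ → ℝ} (hab : a ≤ b)
    (he : ContDiff ℝ 1 (uncurry e)) (hF : ContDiff ℝ 1 (uncurry F))
    (hbalance : ∀ x ∈ Ioo a b, pt e x t = d x + px F x t) :
    HasDerivAt (fun τ => ∫ x in a..b, e x τ) ((∫ x in a..b, d x) + (F b t - F a t)) t := by
  have hFx : IntervalIntegrable (fun x => px F x t) volume a b :=
    ((continuous_px hF).uncurry_right t).intervalIntegrable a b
  have hd : IntervalIntegrable d volume a b :=
    (((continuous_pt he).uncurry_right t).intervalIntegrable a b |>.sub hFx).congr_uIoo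
      fun x hx => by
        rw [uIoo_of_le hab] at hx
        exact (eq_sub_of_add_eq (hbalance x hx).symm).symm
  have hflux : ∫ x in a..b, px F x t = F b t - F a t :=
    intervalIntegral.integral_eq_sub_of_hasDerivAt (fun x _ => hF.hasDerivAt_px) hFx
  rw [← hflux, ← intervalIntegral.integral_add hd hFx,
    ← intervalIntegral.integral_congr_Ioo_of_le hab hbalance]
  exact hasDerivAt_intervalIntegral_of_contDiff he

end EnergyBalance

section LorenzPiezoelectric

variable {ρ α γ μ ξ ε₃ a b c : ℝ} {v φ θ η : ℝ → ℝ → ℝ} {x t : ℝ}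

theorem contDiff_energyDensity {n : WithTop ℕ∞} (hv : ContDiff ℝ (n + 1) (uncurry v))
    (hφ : ContDiff ℝ (n + 1) (uncurry φ)) (hθ : ContDiff ℝ (n + 1) (uncurry θ))
    (hη : ContDiff ℝ (n + 1) (uncurry η)) :
    ContDiff ℝ n (uncurry (energyDensity ρ α μ ξ ε₃ v φ θ η)) := by
  have hvt := contDiff_pt hv
  have hvx := contDiff_px hv
  have hφx := contDiff_px hφ
  have hθt := contDiff_pt hθ
  have hηt := contDiff_pt hη
  have hηx := contDiff_px hη
  have hφ' := hφ.of_le le_self_add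
  have hθ' := hθ.of_le le_self_add
  simp only [uncurry_def] at *
  unfold energyDensity
  fun_prop

theorem contDiff_energyFlux {n : WithTop ℕ∞} (hv : ContDiff ℝ (n + 1) (uncurry v))
    (hφ : ContDiff ℝ (n + 1) (uncurry φ)) (hθ : ContDiff ℝ (n + 1) (uncurry θ))
    (hη : ContDiff ℝ (n + 1) (uncurry η)) :
    ContDiff ℝ n (uncurry (energyFlux α γ μ v φ θ η)) := by
  have hvt := contDiff_pt hv
  have hvx := contDiff_px hv
  have hηt := contDiff_pt hη
  have hηx := contDiff_px hη
  have hφ' := hφ.of_le le_self_add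
  have hθ' := hθ.of_le le_self_add
  simp only [uncurry_def] at *
  unfold energyFlux
  fun_prop

theorem energy_eq_integral_energyDensity (L : ℝ) (hv : ContDiff ℝ 1 (uncurry v))
    (hφ : ContDiff ℝ 1 (uncurry φ)) (hθ : ContDiff ℝ 1 (uncurry θ))
    (hη : ContDiff ℝ 1 (uncurry η)) (t : ℝ) :
    energy ρ α μ ξ ε₃ L v φ θ η t = ∫ x in (0:ℝ)..L, energyDensity ρ α μ ξ ε₃ v φ θ η x t := by
  have hvt := (continuous_pt hv).uncurry_right t
  have hvx := (continuous_px hv).uncurry_right t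
  have hφx := (continuous_px hφ).uncurry_right t
  have hθt := (continuous_pt hθ).uncurry_right t
  have hηt := (continuous_pt hη).uncurry_right t
  have hηx := (continuous_px hη).uncurry_right t
  have hφ' := hφ.continuous.uncurry_right t
  have hθ' := hθ.continuous.uncurry_right t
  simp only [energy, energyDensity, ← intervalIntegral.integral_const_mul]
  rw [intervalIntegral.integral_add, intervalIntegral.integral_add, intervalIntegral.integral_add]
  all_goals exact Continuous.intervalIntegrable (by fun_prop) _ _

theorem integral_dissipationDensity (L : ℝ) (hv : ContDiff ℝ 1 (uncurry v))
    (hφ : ContDiff ℝ 1 (uncurry φ)) (hθ : ContDiff ℝ 1 (uncurry θ))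
    (hη : ContDiff ℝ 1 (uncurry η)) (t : ℝ) :
    ∫ x in (0:ℝ)..L, dissipationDensity a b c ξ ε₃ v φ θ η x t
      = a * (∫ x in (0:ℝ)..L, (pt v x t) ^ 2)
        + b * ξ * ε₃ * (∫ x in (0:ℝ)..L, (pt θ x t + px φ x t) ^ 2)
        + c * ε₃ * (∫ x in (0:ℝ)..L, (pt η x t + φ x t) ^ 2) := by
  have hvt := (continuous_pt hv).uncurry_right t
  have hφx := (continuous_px hφ).uncurry_right t
  have hθt := (continuous_pt hθ).uncurry_right t
  have hηt := (continuous_pt hη).uncurry_right t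
  have hφ' := hφ.continuous.uncurry_right t
  simp only [dissipationDensity, ← intervalIntegral.integral_const_mul]
  rw [intervalIntegral.integral_add, intervalIntegral.integral_add]
  all_goals exact Continuous.intervalIntegrable (by fun_prop) _ _

theorem pt_energyDensity (hv : ContDiff ℝ 2 (uncurry v)) (hφ : ContDiff ℝ 2 (uncurry φ))
    (hθ : ContDiff ℝ 2 (uncurry θ)) (hη : ContDiff ℝ 2 (uncurry η)) :
    pt (energyDensity ρ α μ ξ ε₃ v φ θ η) x t
      = ρ * pt v x t * pt (pt v) x t + α * px v x t * pt (px v) x t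
        + μ * (θ x t - px η x t) * (pt θ x t - pt (px η) x t)
        + ξ * ε₃ * (pt θ x t + px φ x t) * (pt (pt θ) x t + pt (px φ) x t)
        + ε₃ * (pt η x t + φ x t) * (pt (pt η) x t + pt φ x t) := by
  have hvt := (contDiff_pt hv).hasDerivAt_pt (x := x) (t := t)
  have hvx := (contDiff_px hv).hasDerivAt_pt (x := x) (t := t)
  have hφx := (contDiff_px hφ).hasDerivAt_pt (x := x) (t := t)
  have hθt := (contDiff_pt hθ).hasDerivAt_pt (x := x) (t := t)
  have hηt := (contDiff_pt hη).hasDerivAt_pt (x := x) (t := t)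
  have hηx := (contDiff_px hη).hasDerivAt_pt (x := x) (t := t)
  have hφ' := (hφ.of_le one_le_two).hasDerivAt_pt (x := x) (t := t)
  have hθ' := (hθ.of_le one_le_two).hasDerivAt_pt (x := x) (t := t)
  have := (((((hvt.pow 2).const_mul (ρ / 2)).add ((hvx.pow 2).const_mul (α / 2))).add
    (((hθ'.sub hηx).pow 2).const_mul (μ / 2))).add
    (HasDerivAt.const_mul (1 / 2) ((((hθt.add hφx).pow 2).const_mul (ξ * ε₃)).add
      (((hηt.add hφ').pow 2).const_mul ε₃))))
  exact this.deriv.trans (by simp only [Pi.add_apply, Pi.sub_apply]; ring)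

theorem px_energyFlux (hv : ContDiff ℝ 2 (uncurry v)) (hφ : ContDiff ℝ 1 (uncurry φ))
    (hθ : ContDiff ℝ 1 (uncurry θ)) (hη : ContDiff ℝ 2 (uncurry η)) :
    px (energyFlux α γ μ v φ θ η) x t
      = px (pt v) x t * (α * px v x t + γ * φ x t + γ * pt η x t)
        + pt v x t * (α * px (px v) x t + γ * px φ x t + γ * px (pt η) x t)
        - μ * (px θ x t - px (px η) x t) * (pt η x t + φ x t)
        - μ * (θ x t - px η x t) * (px (pt η) x t + px φ x t) := by
  have hvt := (contDiff_pt hv).hasDerivAt_px (x := x) (t := t)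
  have hvx := (contDiff_px hv).hasDerivAt_px (x := x) (t := t)
  have hηt := (contDiff_pt hη).hasDerivAt_px (x := x) (t := t)
  have hηx := (contDiff_px hη).hasDerivAt_px (x := x) (t := t)
  have hφ' := hφ.hasDerivAt_px (x := x) (t := t)
  have hθ' := hθ.hasDerivAt_px (x := x) (t := t)
  have := (hvt.mul (((hvx.const_mul α).add (hφ'.const_mul γ)).add (hηt.const_mul γ))).sub
    (((hθ'.sub hηx).const_mul μ).mul (hηt.add hφ'))
  exact this.deriv.trans (by simp only [Pi.add_apply, Pi.sub_apply]; ring)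

theorem gauge_px_of_eventually (hφ : ContDiff ℝ 2 (uncurry φ)) (hθ : ContDiff ℝ 2 (uncurry θ))
    (hη : ContDiff ℝ 1 (uncurry η))
    (gauge : ∀ᶠ y in nhds x, -ξ * px θ y t + η y t = ξ * ε₃ / μ * pt φ y t) :
    -ξ * px (px θ) x t + px η x t = ξ * ε₃ / μ * px (pt φ) x t :=
  ((((contDiff_px hθ).hasDerivAt_px).const_mul (-ξ)).add hη.hasDerivAt_px
    |>.congr_of_eventuallyEq (gauge.mono fun _ h => h.symm)).unique
    (((contDiff_pt hφ).hasDerivAt_px).const_mul (ξ * ε₃ / μ))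

theorem pt_energyDensity_eq_neg_dissipationDensity_add_px_energyFlux
    (hμ : μ ≠ 0) (hξ : ξ ≠ 0) (hε : ε₃ ≠ 0)
    (hv : ContDiff ℝ 2 (uncurry v)) (hφ : ContDiff ℝ 2 (uncurry φ))
    (hθ : ContDiff ℝ 2 (uncurry θ)) (hη : ContDiff ℝ 2 (uncurry η))
    (eqv : ρ * pt (pt v) x t - α * px (px v) x t
        - γ * px (fun y s => φ y s + pt η y s) x t + a * pt v x t = 0)
    (eqθ : pt (pt θ) x t - (μ / ε₃) * px (px θ) x t + (μ / (ξ * ε₃)) * θ x t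
        + b * (pt θ x t + px φ x t) = 0)
    (eqη : pt (pt η) x t - (μ / ε₃) * px (px η) x t + (μ / (ξ * ε₃)) * η x t
        - (γ / ε₃) * px (pt v) x t + c * (pt η x t + φ x t) = 0)
    (gauge : ∀ᶠ y in nhds x, -ξ * px θ y t + η y t = ξ * ε₃ / μ * pt φ y t) :
    pt (energyDensity ρ α μ ξ ε₃ v φ θ η) x t
      = -dissipationDensity a b c ξ ε₃ v φ θ η x t + px (energyFlux α γ μ v φ θ η) x t := by
  have hsum : px (fun y s => φ y s + pt η y s) x t = px φ x t + px (pt η) x t :=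
    ((hφ.of_le one_le_two).hasDerivAt_px.add (contDiff_pt hη).hasDerivAt_px).deriv
  rw [hsum] at eqv
  rw [pt_energyDensity hv hφ hθ hη,
    px_energyFlux hv (hφ.of_le one_le_two) (hθ.of_le one_le_two) hη, dissipationDensity]
  linear_combination (norm := skip) pt v x t * eqv
    + ξ * ε₃ * (pt θ x t + px φ x t) * eqθ + ε₃ * (pt η x t + φ x t) * eqη
    - μ / ξ * (pt η x t + φ x t) * gauge.self_of_nhds
    - μ * (pt θ x t + px φ x t) * gauge_px_of_eventually hφ hθ (hη.of_le one_le_two) gauge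
    + α * px v x t * pt_px_comm hv x t + ξ * ε₃ * (pt θ x t + px φ x t) * pt_px_comm hφ x t
    - μ * (θ x t - px η x t) * pt_px_comm hη x t
  field_simp
  ring

theorem dissipationDensity_nonneg (ha : 0 ≤ a) (hb : 0 ≤ b) (hc : 0 ≤ c) (hξ : 0 ≤ ξ)
    (hε : 0 ≤ ε₃) : 0 ≤ dissipationDensity a b c ξ ε₃ v φ θ η x t := by
  unfold dissipationDensity
  positivity

end LorenzPiezoelectric

theorem stmt_15_general (ρ α γ μ ξ ε₃ L a b c : ℝ)
    (hμ : 0 < μ) (hξ : 0 < ξ)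
    (hε : 0 < ε₃) (hL : 0 < L) (ha : 0 ≤ a) (hb : 0 ≤ b) (hc : 0 ≤ c)
    (v φ θ η : ℝ → ℝ → ℝ)
    (hv : ContDiff ℝ 2 (Function.uncurry v)) (hφ : ContDiff ℝ 2 (Function.uncurry φ))
    (hθ : ContDiff ℝ 2 (Function.uncurry θ)) (hη : ContDiff ℝ 2 (Function.uncurry η))
    -- the Lorenz piezoelectric system:
    (eqv : ∀ x ∈ Icc (0:ℝ) L, ∀ t : ℝ, 0 ≤ t →
      ρ * pt (pt v) x t - α * px (px v) x t
        - γ * px (fun y s => φ y s + pt η y s) x t + a * pt v x t = 0)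
    (eqθ : ∀ x ∈ Icc (0:ℝ) L, ∀ t : ℝ, 0 ≤ t →
      pt (pt θ) x t - (μ / ε₃) * px (px θ) x t + (μ / (ξ * ε₃)) * θ x t
        + b * (pt θ x t + px φ x t) = 0)
    (eqη : ∀ x ∈ Icc (0:ℝ) L, ∀ t : ℝ, 0 ≤ t →
      pt (pt η) x t - (μ / ε₃) * px (px η) x t + (μ / (ξ * ε₃)) * η x t
        - (γ / ε₃) * px (pt v) x t + c * (pt η x t + φ x t) = 0)
    -- boundary conditions:
    (bc1 : ∀ t : ℝ, 0 ≤ t → v 0 t = 0)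
    (bc2 : ∀ t : ℝ, 0 ≤ t → α * px v L t + γ * φ L t + γ * pt η L t = 0)
    (bc4 : ∀ t : ℝ, 0 ≤ t → px η 0 t = 0 ∧ px η L t = 0)
    (bc5 : ∀ t : ℝ, 0 ≤ t → θ 0 t = 0 ∧ θ L t = 0)
    -- Lorenz gauge condition:
    (gauge : ∀ x ∈ Icc (0:ℝ) L, ∀ t : ℝ, 0 ≤ t →
      -ξ * px θ x t + η x t = (ξ * ε₃ / μ) * pt φ x t) :
    (∀ t : ℝ, 0 ≤ t →
      HasDerivAt (energy ρ α μ ξ ε₃ L v φ θ η)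
        (-(a * ∫ x in (0:ℝ)..L, (pt v x t) ^ 2)
          - b * ξ * ε₃ * (∫ x in (0:ℝ)..L, (pt θ x t + px φ x t) ^ 2)
          - c * ε₃ * (∫ x in (0:ℝ)..L, (pt η x t + φ x t) ^ 2)) t ∧
      (-(a * ∫ x in (0:ℝ)..L, (pt v x t) ^ 2)
          - b * ξ * ε₃ * (∫ x in (0:ℝ)..L, (pt θ x t + px φ x t) ^ 2)
          - c * ε₃ * (∫ x in (0:ℝ)..L, (pt η x t + φ x t) ^ 2)) ≤ 0) ∧
    AntitoneOn (energy ρ α μ ξ ε₃ L v φ θ η) (Ici 0) := by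
  have hv1 := hv.of_le one_le_two
  have hφ1 := hφ.of_le one_le_two
  have hθ1 := hθ.of_le one_le_two
  have hη1 := hη.of_le one_le_two
  have hderiv : ∀ t, 0 ≤ t → HasDerivAt (energy ρ α μ ξ ε₃ L v φ θ η)
      (-∫ x in (0:ℝ)..L, dissipationDensity a b c ξ ε₃ v φ θ η x t) t := by
    intro t ht
    have hvt0 : pt v 0 t = 0 := hv1.hasDerivAt_pt.eq_zero_of_forall_Ici ht bc1
    have hflux0 : energyFlux α γ μ v φ θ η 0 t = 0 := by
      simp [energyFlux, hvt0, (bc5 t ht).1, (bc4 t ht).1]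
    have hfluxL : energyFlux α γ μ v φ θ η L t = 0 := by
      simp [energyFlux, bc2 t ht, (bc5 t ht).2, (bc4 t ht).2]
    have hbalance := hasDerivAt_intervalIntegral_of_balance hL.le
      (contDiff_energyDensity hv hφ hθ hη) (contDiff_energyFlux hv hφ hθ hη) fun x hx =>
        pt_energyDensity_eq_neg_dissipationDensity_add_px_energyFlux hμ.ne' hξ.ne' hε.ne'
          hv hφ hθ hη
          (eqv x (Ioo_subset_Icc_self hx) t ht) (eqθ x (Ioo_subset_Icc_self hx) t ht)
          (eqη x (Ioo_subset_Icc_self hx) t ht)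
          (Filter.eventually_of_mem (Ioo_mem_nhds hx.1 hx.2) fun y hy =>
            gauge y (Ioo_subset_Icc_self hy) t ht)
    rw [hflux0, hfluxL, sub_zero, add_zero, intervalIntegral.integral_neg] at hbalance
    rwa [funext (energy_eq_integral_energyDensity L hv1 hφ1 hθ1 hη1)]
  have hrate_nonpos : ∀ t, -∫ x in (0:ℝ)..L, dissipationDensity a b c ξ ε₃ v φ θ η x t ≤ 0 :=
    fun t => neg_nonpos.mpr <| intervalIntegral.integral_nonneg hL.le fun _ _ =>
      dissipationDensity_nonneg ha hb hc hξ.le hε.le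
  have hrate : ∀ t, -∫ x in (0:ℝ)..L, dissipationDensity a b c ξ ε₃ v φ θ η x t
      = -(a * ∫ x in (0:ℝ)..L, (pt v x t) ^ 2)
        - b * ξ * ε₃ * (∫ x in (0:ℝ)..L, (pt θ x t + px φ x t) ^ 2)
        - c * ε₃ * (∫ x in (0:ℝ)..L, (pt η x t + φ x t) ^ 2) := fun t => by
    rw [integral_dissipationDensity L hv1 hφ1 hθ1 hη1]
    ring
  refine ⟨fun t ht => hrate t ▸ ⟨hderiv t ht, hrate_nonpos t⟩, ?_⟩
  exact antitoneOn_of_deriv_nonpos (convex_Ici 0)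
    (fun t ht => (hderiv t ht).continuousAt.continuousWithinAt)
    (fun t ht => (hderiv t (interior_subset ht)).differentiableAt.differentiableWithinAt)
    fun t ht => (hderiv t (interior_subset ht)).deriv ▸ hrate_nonpos t

/-- energy dissipation identity for the damped Lorenz piezoelectric
system: E'(t) = −a∫|v_t|² − bξε₃∫|θ_t+φ_x|² − cε₃∫|η_t+φ|² ≤ 0, so E is
nonincreasing. -/
theorem stmt_15 (ρ α γ μ ξ ε₃ L a b c : ℝ)
    (hρ : 0 < ρ) (hα : 0 < α) (hγ : 0 < γ) (hμ : 0 < μ) (hξ : 0 < ξ)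
    (hε : 0 < ε₃) (hL : 0 < L) (ha : 0 ≤ a) (hb : 0 ≤ b) (hc : 0 ≤ c)
    (v φ θ η : ℝ → ℝ → ℝ)
    (hv : ContDiff ℝ 2 (Function.uncurry v)) (hφ : ContDiff ℝ 2 (Function.uncurry φ))
    (hθ : ContDiff ℝ 2 (Function.uncurry θ)) (hη : ContDiff ℝ 2 (Function.uncurry η))
    -- the Lorenz piezoelectric system:
    (eqv : ∀ x ∈ Icc (0:ℝ) L, ∀ t : ℝ, 0 ≤ t →
      ρ * pt (pt v) x t - α * px (px v) x t
        - γ * px (fun y s => φ y s + pt η y s) x t + a * pt v x t = 0)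
    (eqφ : ∀ x ∈ Icc (0:ℝ) L, ∀ t : ℝ, 0 ≤ t →
      pt (pt φ) x t - (μ / ε₃) * px (px φ) x t + (μ / (ξ * ε₃)) * φ x t
        - (γ * μ / (ξ * ε₃ ^ 2)) * px v x t = 0)
    (eqθ : ∀ x ∈ Icc (0:ℝ) L, ∀ t : ℝ, 0 ≤ t →
      pt (pt θ) x t - (μ / ε₃) * px (px θ) x t + (μ / (ξ * ε₃)) * θ x t
        + b * (pt θ x t + px φ x t) = 0)
    (eqη : ∀ x ∈ Icc (0:ℝ) L, ∀ t : ℝ, 0 ≤ t →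
      pt (pt η) x t - (μ / ε₃) * px (px η) x t + (μ / (ξ * ε₃)) * η x t
        - (γ / ε₃) * px (pt v) x t + c * (pt η x t + φ x t) = 0)
    -- boundary conditions:
    (bc1 : ∀ t : ℝ, 0 ≤ t → v 0 t = 0)
    (bc2 : ∀ t : ℝ, 0 ≤ t → α * px v L t + γ * φ L t + γ * pt η L t = 0)
    (bc3 : ∀ t : ℝ, 0 ≤ t → px φ 0 t = 0 ∧ px φ L t = 0)
    (bc4 : ∀ t : ℝ, 0 ≤ t → px η 0 t = 0 ∧ px η L t = 0)
    (bc5 : ∀ t : ℝ, 0 ≤ t → θ 0 t = 0 ∧ θ L t = 0)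
    -- Lorenz gauge condition:
    (gauge : ∀ x ∈ Icc (0:ℝ) L, ∀ t : ℝ, 0 ≤ t →
      -ξ * px θ x t + η x t = (ξ * ε₃ / μ) * pt φ x t) :
    (∀ t : ℝ, 0 ≤ t →
      HasDerivAt (energy ρ α μ ξ ε₃ L v φ θ η)
        (-(a * ∫ x in (0:ℝ)..L, (pt v x t) ^ 2)
          - b * ξ * ε₃ * (∫ x in (0:ℝ)..L, (pt θ x t + px φ x t) ^ 2)
          - c * ε₃ * (∫ x in (0:ℝ)..L, (pt η x t + φ x t) ^ 2)) t ∧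
      (-(a * ∫ x in (0:ℝ)..L, (pt v x t) ^ 2)
          - b * ξ * ε₃ * (∫ x in (0:ℝ)..L, (pt θ x t + px φ x t) ^ 2)
          - c * ε₃ * (∫ x in (0:ℝ)..L, (pt η x t + φ x t) ^ 2)) ≤ 0) ∧
    AntitoneOn (energy ρ α μ ξ ε₃ L v φ θ η) (Ici 0) :=
  stmt_15_general ρ α γ μ ξ ε₃ L a b c hμ hξ hε hL ha hb hc v φ θ η hv hφ hθ hη eqv eqθ eqη bc1 bc2
    bc4 bc5 gauge
end
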